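/- (Hoeffding with dependent summands) Let x_1,...,x_N be random variables with a ≤ x_i ≤ b almost surely, partitioned into M mutually exclusive, collectively exhaustive subsets of cardinalities N_1,...,N_M such that variables within each subset are mutually independent. Then for any t > 0, the sum s_N = Σ x_i satisfies P(|s_N − E[s_N]| ≥ t) ≤ 2M exp( −2t² N_min / (N² (b−a)²) ), where N_min = min_m N_m. -/

import Mathlib

/-!
Split the centred sum into its `M` block sums. If `|s_N - E s_N| ≥ t`, some block deviates by at
least its share `t N_m / N`, because the shares add up to `t`. Within a block the summands are
independent and lie in `[a, b]`, so Hoeffding's inequality bounds that event by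
`2 exp (-2 t² N_m / (N² (b - a)²)) ≤ 2 exp (-2 t² N_min / (N² (b - a)²))`; a union bound over the
blocks gives the factor `M`.
-/

open MeasureTheory ProbabilityTheory Real
open scoped NNReal

namespace ProbabilityTheory.HasSubgaussianMGF

variable {Ω : Type*} [MeasurableSpace Ω] {μ : Measure Ω} [IsFiniteMeasure μ] {X : Ω → ℝ}
  {c : ℝ≥0}

lemma measure_abs_ge_le (h : HasSubgaussianMGF X c μ) {ε : ℝ} (hε : 0 ≤ ε) :
    μ {ω | ε ≤ |X ω|} ≤ ENNReal.ofReal (2 * exp (-ε ^ 2 / (2 * c))) := by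
  have hsplit : {ω | ε ≤ |X ω|} = {ω | ε ≤ X ω} ∪ {ω | ε ≤ (-X) ω} := by
    ext ω
    simp only [Set.mem_ofPred_eq, Set.mem_union, Pi.neg_apply, le_abs, le_neg]
  have htail : ∀ {Y : Ω → ℝ}, HasSubgaussianMGF Y c μ →
      μ {ω | ε ≤ Y ω} ≤ ENNReal.ofReal (exp (-ε ^ 2 / (2 * c))) := fun hY => by
    rw [← ofReal_measureReal]
    exact ENNReal.ofReal_le_ofReal (hY.measure_ge_le hε)
  calc μ {ω | ε ≤ |X ω|} ≤ μ {ω | ε ≤ X ω} + μ {ω | ε ≤ (-X) ω} :=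
        hsplit ▸ measure_union_le _ _
    _ ≤ _ := add_le_add (htail h) (htail h.neg)
    _ = _ := by rw [← ENNReal.ofReal_add (by positivity) (by positivity), ← two_mul]

end ProbabilityTheory.HasSubgaussianMGF

lemma measure_abs_sum_sub_integral_ge_le {Ω ι : Type*} [MeasurableSpace Ω] {μ : Measure Ω}
    [IsProbabilityMeasure μ] [Fintype ι] {X : ι → Ω → ℝ}
    (hindep : iIndepFun X μ) (hmeas : ∀ i, AEMeasurable (X i) μ) {a b : ℝ}
    (hbdd : ∀ i, ∀ᵐ ω ∂μ, X i ω ∈ Set.Icc a b) {ε : ℝ} (hε : 0 ≤ ε) :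
    μ {ω | ε ≤ |∑ i, X i ω - ∑ i, ∫ ω', X i ω' ∂μ|} ≤
      ENNReal.ofReal (2 * exp (-2 * ε ^ 2 / (Fintype.card ι * (b - a) ^ 2))) := by
  have hcentered : iIndepFun (fun i ω => X i ω - ∫ ω', X i ω' ∂μ) μ :=
    hindep.comp (fun i x => x - ∫ ω', X i ω' ∂μ) fun _ => measurable_sub_const _
  have hsum := HasSubgaussianMGF.sum_of_iIndepFun hcentered (s := Finset.univ)
    fun i _ => hasSubgaussianMGF_of_mem_Icc (hmeas i) (hbdd i)
  convert hsum.measure_abs_ge_le hε using 3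
  · simp [Finset.sum_sub_distrib]
  · simp only [Finset.sum_const, Finset.card_univ, nsmul_eq_mul]
    push_cast
    congr 1
    rw [Real.norm_eq_abs, div_pow, sq_abs]
    field_simp

lemma measure_le_abs_sum_le_sum {Ω ι : Type*} [MeasurableSpace Ω] (μ : Measure Ω)
    {s : Finset ι} (hs : s.Nonempty) (D : ι → Ω → ℝ) {ε : ι → ℝ} {t : ℝ}
    (hεt : ∑ i ∈ s, ε i ≤ t) :
    μ {ω | t ≤ |∑ i ∈ s, D i ω|} ≤ ∑ i ∈ s, μ {ω | ε i ≤ |D i ω|} := by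
  have hcover : {ω | t ≤ |∑ i ∈ s, D i ω|} ⊆ ⋃ i ∈ s, {ω | ε i ≤ |D i ω|} := by
    intro ω hω
    by_contra hnot
    simp only [Set.mem_iUnion, Set.mem_ofPred_eq, not_exists, not_le] at hω hnot
    have := (Finset.abs_sum_le_sum_abs _ s).trans_lt (Finset.sum_lt_sum_of_nonempty hs hnot)
    linarith
  exact (measure_mono hcover).trans (measure_biUnion_finset_le s _)

lemma hoeffding_exponent_share_le {t d : ℝ} {n k N : ℕ} (hd : 0 ≤ d) (hk : k ≤ n) :
    -2 * (t * n / N) ^ 2 / (n * d) ≤ -2 * t ^ 2 * k / (N ^ 2 * d) := by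
  rcases Nat.eq_zero_or_pos n with rfl | hn
  · simp [Nat.le_zero.mp hk]
  rw [show -2 * (t * n / N) ^ 2 / (n * d) = -2 * t ^ 2 * n / (N ^ 2 * d) by
    field_simp]
  have hkn : (k : ℝ) ≤ n := by exact_mod_cast hk
  exact div_le_div_of_nonneg_right (by nlinarith [sq_nonneg t]) (by positivity)

theorem hoeffding_dependent_summands
    {Ω : Type*} [MeasurableSpace Ω] (μ : Measure Ω) [IsProbabilityMeasure μ]
    (N M : ℕ) (hM : 0 < M) (X : Fin N → Ω → ℝ) (a b : ℝ)
    (hmeas : ∀ i, Measurable (X i))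
    (hbdd : ∀ i, ∀ᵐ ω ∂μ, X i ω ∈ Set.Icc a b)
    (c : Fin N → Fin M)
    (hindep : ∀ m : Fin M,
      iIndepFun (fun i : {i : Fin N // c i = m} => X i) μ)
    (Nmin : ℕ)
    (hNmin : Nmin = Finset.univ.inf' (Finset.univ_nonempty_iff.mpr ⟨⟨0, hM⟩⟩) fun m : Fin M =>
      (Finset.univ.filter fun i : Fin N => c i = m).card)
    (t : ℝ) (ht : 0 < t) :
    μ {ω | t ≤ |(∑ i, X i ω) - ∑ i, ∫ ω', X i ω' ∂μ|} ≤
      ENNReal.ofReal (2 * M *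
        Real.exp (-2 * t ^ 2 * Nmin / ((N : ℝ) ^ 2 * (b - a) ^ 2))) := by
  set size : Fin M → ℕ := fun m => Fintype.card {i // c i = m}
  have hsize : ∑ m, (size m : ℝ) = N := by
    simpa [size] using Fintype.sum_fiberwise c fun _ => (1 : ℝ)
  have hNmin_le (m : Fin M) : Nmin ≤ size m := by
    rw [hNmin]
    exact (Finset.inf'_le _ (Finset.mem_univ m)).trans_eq (Fintype.card_subtype _).symm
  set ε : Fin M → ℝ := fun m => t * size m / N
  have hεt : ∑ m, ε m ≤ t := by
    rw [← Finset.sum_div, ← Finset.mul_sum, hsize]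
    exact div_le_of_le_mul₀ (Nat.cast_nonneg N) ht.le le_rfl
  have hsplit (ω : Ω) : ∑ i, X i ω - ∑ i, ∫ ω', X i ω' ∂μ =
      ∑ m, (∑ i : {i // c i = m}, X i ω - ∑ i : {i // c i = m}, ∫ ω', X i ω' ∂μ) := by
    rw [Finset.sum_sub_distrib, Fintype.sum_fiberwise c fun i => X i ω,
      Fintype.sum_fiberwise c fun i => ∫ ω', X i ω' ∂μ]
  have hblock (m : Fin M) :
      μ {ω | ε m ≤ |∑ i : {i // c i = m}, X i ω - ∑ i : {i // c i = m}, ∫ ω', X i ω' ∂μ|} ≤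
        ENNReal.ofReal (2 * exp (-2 * t ^ 2 * Nmin / ((N : ℝ) ^ 2 * (b - a) ^ 2))) :=
    (measure_abs_sum_sub_integral_ge_le (hindep m) (fun i => (hmeas i).aemeasurable)
      (fun i => hbdd i) (by positivity)).trans <| ENNReal.ofReal_le_ofReal <| by
        gcongr 2 * exp ?_
        exact hoeffding_exponent_share_le (sq_nonneg _) (hNmin_le m)
  calc μ {ω | t ≤ |(∑ i, X i ω) - ∑ i, ∫ ω', X i ω' ∂μ|}
      ≤ ∑ m, μ {ω | ε m ≤
          |∑ i : {i // c i = m}, X i ω - ∑ i : {i // c i = m}, ∫ ω', X i ω' ∂μ|} := by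
        simp_rw [hsplit]
        exact measure_le_abs_sum_le_sum μ (Finset.univ_nonempty_iff.mpr ⟨⟨0, hM⟩⟩) _ hεt
    _ ≤ ∑ _m : Fin M, ENNReal.ofReal
          (2 * exp (-2 * t ^ 2 * Nmin / ((N : ℝ) ^ 2 * (b - a) ^ 2))) :=
        Finset.sum_le_sum fun m _ => hblock m
    _ = _ := by
        rw [Finset.sum_const, Finset.card_univ, Fintype.card_fin, nsmul_eq_mul,
          ← ENNReal.ofReal_natCast, ← ENNReal.ofReal_mul (Nat.cast_nonneg M), ← mul_assoc,
          mul_comm (M : ℝ)]
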